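/- arXiv:1606.01715 — 2 statements merged into one kernel-verified Lean document; each statement's English description precedes it below -/
import Mathlib

section
/- For every real x ≥ 1, ∑_{n : α(n) ≤ x} φ(n)·⌊x/α(n)⌋ = a_{⌊x⌋+2} - 1, where φ is Euler's totient function. -/
/-!
Since `n ∣ a_m ↔ α(n) ∣ m`, the factor `⌊x⌋ / α(n)` counts the `m ≤ x` with `n ∣ a_m`.
Swapping the two sums, each `m ≤ x` contributes `∑_{d ∣ a_m} φ(d) = a_m` (all these divisors lie
in `[1, a_⌊x⌋]`), and `∑_{m ≤ N} a_m = a_{N+2} - 1`.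
-/

open Finset Nat

noncomputable def fibAlpha (n : ℕ) : ℕ := sInf {m | 0 < m ∧ n ∣ Nat.fib m}

theorem dvd_fib_iff_fibAlpha_dvd {n m : ℕ} (hm : 0 < m) : n ∣ fib m ↔ fibAlpha n ∣ m := by
  set S : Set ℕ := {m | 0 < m ∧ n ∣ fib m}
  constructor
  · intro h
    obtain ⟨hpos, hdvd⟩ : fibAlpha n ∈ S := Nat.sInf_mem ⟨m, hm, h⟩
    have hgcd_mem : Nat.gcd (fibAlpha n) m ∈ S :=
      ⟨Nat.gcd_pos_of_pos_right _ hm, by rw [fib_gcd]; exact Nat.dvd_gcd hdvd h⟩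
    have hgcd : Nat.gcd (fibAlpha n) m = fibAlpha n :=
      le_antisymm (Nat.gcd_le_left _ hpos) (Nat.sInf_le hgcd_mem)
    exact hgcd ▸ Nat.gcd_dvd_right _ _
  · intro h
    rcases S.eq_empty_or_nonempty with hS | hS
    · have hzero : fibAlpha n = 0 := by rw [show fibAlpha n = sInf S from rfl, hS, Nat.sInf_empty]
      rw [hzero, zero_dvd_iff] at h
      omega
    · exact (Nat.sInf_mem hS).2.trans (fib_dvd _ _ h)

theorem card_filter_dvd_fib_Icc (n N : ℕ) : #{m ∈ Icc 1 N | n ∣ fib m} = N / fibAlpha n := by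
  rw [← Nat.Ioc_filter_dvd_card_eq_div, ← Icc_add_one_left_eq_Ioc]
  exact congrArg card (filter_congr fun m hm => dvd_fib_iff_fibAlpha_dvd (mem_Icc.1 hm).1)

theorem sum_totient_filter_dvd_Icc {k M : ℕ} (hk : k ≠ 0) (hkM : k ≤ M) :
    ∑ n ∈ Icc 1 M with n ∣ k, φ n = k := by
  conv_rhs => rw [← sum_totient k]
  congr 1
  ext n
  simp only [mem_filter, mem_Icc, mem_divisors]
  constructor
  · rintro ⟨-, hn⟩
    exact ⟨hn, hk⟩
  · rintro ⟨hn, -⟩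
    have hk' := pos_of_ne_zero hk
    exact ⟨⟨pos_of_dvd_of_pos hn hk', (le_of_dvd hk' hn).trans hkM⟩, hn⟩

theorem Finset.sum_mul_card_filter {α β : Type*} (s : Finset α) (t : Finset β) (r : α → β → Prop)
    [∀ a b, Decidable (r a b)] (g : α → ℕ) :
    ∑ a ∈ s, g a * #{b ∈ t | r a b} = ∑ b ∈ t, ∑ a ∈ s with r a b, g a := by
  simp only [card_eq_sum_ones, sum_filter, mul_sum, mul_ite, mul_one, mul_zero]
  rw [sum_comm]

theorem sum_fib_Icc (N : ℕ) : ∑ m ∈ Icc 1 N, fib m = fib (N + 2) - 1 := by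
  induction N with
  | zero => rfl
  | succ N ih =>
    have hpos : 0 < fib (N + 2) := fib_pos.2 (by omega)
    have hrec : fib (N + 3) = fib (N + 1) + fib (N + 2) := fib_add_two
    rw [sum_Icc_succ_top (by omega), ih, hrec]
    omega

theorem sum_totient_mul_div_fibAlpha (N : ℕ) :
    ∑ n ∈ Icc 1 (fib N) with fibAlpha n ≤ N, φ n * (N / fibAlpha n) = fib (N + 2) - 1 := by
  rw [sum_filter_of_ne fun n _ h => ?_]
  · calc ∑ n ∈ Icc 1 (fib N), φ n * (N / fibAlpha n)
        = ∑ n ∈ Icc 1 (fib N), φ n * #{m ∈ Icc 1 N | n ∣ fib m} := by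
          simp only [card_filter_dvd_fib_Icc]
      _ = ∑ m ∈ Icc 1 N, ∑ n ∈ Icc 1 (fib N) with n ∣ fib m, φ n := sum_mul_card_filter ..
      _ = ∑ m ∈ Icc 1 N, fib m := sum_congr rfl fun m hm =>
          sum_totient_filter_dvd_Icc (fib_pos.2 (mem_Icc.1 hm).1).ne' (fib_mono (mem_Icc.1 hm).2)
      _ = fib (N + 2) - 1 := sum_fib_Icc N
  · by_contra hlt
    exact h (by rw [Nat.div_eq_of_lt (not_le.1 hlt), mul_zero])

theorem totient_sum_alpha_general (x : ℝ) :
    ∑ n ∈ (Icc 1 (Nat.fib ⌊x⌋₊)).filter (fun n => fibAlpha n ≤ ⌊x⌋₊),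
        Nat.totient n * (⌊x⌋₊ / fibAlpha n)
      = Nat.fib (⌊x⌋₊ + 2) - 1 :=
  sum_totient_mul_div_fibAlpha ⌊x⌋₊

theorem totient_sum_alpha (x : ℝ) (hx : 1 ≤ x) :
    ∑ n ∈ (Icc 1 (Nat.fib ⌊x⌋₊)).filter (fun n => fibAlpha n ≤ ⌊x⌋₊),
        Nat.totient n * (⌊x⌋₊ / fibAlpha n)
      = Nat.fib (⌊x⌋₊ + 2) - 1 :=
  totient_sum_alpha_general x
end

section
/- The triple α-contraction of the Möbius function is a fixed point of α-contraction: for all n ≥ 1, ∑_{d : α(d) = n} μ_{α³}(d) = μ_{α³}(n). -/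
/-!
Summing `f_α` over the divisors of `n` gives the sum of `f` over the divisors of `F_n`, since
`m ∣ F_n ↔ α(m) ∣ n`. The divisor sums of `μ` are the indicator of `N ≤ 1`, so by induction the
divisor sums of each iterated contraction are an indicator of an initial segment `N ≤ c`, the next
cut-off being the largest `b` with `F_b ≤ c`. Starting from `c = 1` this gives `2, 3, 4, 4`: the
cut-off `4` is stable because `F_4 = 3 ≤ 4 < 5 = F_5`. Möbius inversion then turns equal divisor
sums into equal functions.
-/

open Finset

noncomputable def alphaCon (f : ℕ → ℤ) (n : ℕ) : ℤ :=
  ∑ m ∈ (Icc 1 (Nat.fib n)).filter (fun m => fibAlpha m = n), f m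

section FibStep

variable {R : Type*}

def fibStep [Add R] (x : R × R) : R × R := (x.2, x.1 + x.2)

lemma fibStep_injective [AddGroup R] : Function.Injective (fibStep (R := R)) := by
  rintro ⟨a, b⟩ ⟨a', b'⟩ h
  simp only [fibStep, Prod.mk.injEq] at h
  obtain ⟨rfl, h⟩ := h
  simp only [Prod.mk.injEq, and_true]
  exact add_right_cancel h

lemma fibStep_iterate [AddMonoidWithOne R] (k : ℕ) :
    (fibStep)^[k] ((0, 1) : R × R) = ((Nat.fib k : R), (Nat.fib (k + 1) : R)) := by
  induction k with
  | zero => simp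
  | succ k ih =>
    rw [Function.iterate_succ_apply', ih, fibStep, Nat.fib_add_two, Nat.cast_add]

end FibStep

/-- The Fibonacci sequence is periodic modulo `n`, as `fibStep` is injective on the finite set
`ZMod n × ZMod n`. -/
lemma exists_pos_dvd_fib {n : ℕ} (hn : 0 < n) : ∃ k, 0 < k ∧ n ∣ Nat.fib k := by
  have : NeZero n := ⟨hn.ne'⟩
  obtain ⟨k, hk, hper⟩ :=
    fibStep_injective.mem_periodicPts ((0, 1) : ZMod n × ZMod n)
  refine ⟨k, hk, (ZMod.natCast_eq_zero_iff _ _).mp ?_⟩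
  have := congrArg Prod.fst hper.eq
  rwa [fibStep_iterate] at this

lemma fibAlpha_pos {n : ℕ} (hn : 0 < n) : 0 < fibAlpha n :=
  (Nat.sInf_mem (exists_pos_dvd_fib hn)).1

lemma dvd_fib_fibAlpha {n : ℕ} (hn : 0 < n) : n ∣ Nat.fib (fibAlpha n) :=
  (Nat.sInf_mem (exists_pos_dvd_fib hn)).2

lemma fibAlpha_le {n k : ℕ} (hk : 0 < k) (h : n ∣ Nat.fib k) : fibAlpha n ≤ k :=
  Nat.sInf_le ⟨hk, h⟩

lemma fibAlpha_dvd_iff {n : ℕ} (hn : 0 < n) (k : ℕ) : fibAlpha n ∣ k ↔ n ∣ Nat.fib k := by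
  refine ⟨fun h => (dvd_fib_fibAlpha hn).trans (Nat.fib_dvd _ _ h), fun h => ?_⟩
  rcases Nat.eq_zero_or_pos k with rfl | hk
  · exact dvd_zero _
  have hgcd : n ∣ Nat.fib ((fibAlpha n).gcd k) := by
    rw [Nat.fib_gcd]
    exact Nat.dvd_gcd (dvd_fib_fibAlpha hn) h
  have hmin := fibAlpha_le (Nat.gcd_pos_of_pos_right _ hk) hgcd
  have hle := Nat.le_of_dvd (fibAlpha_pos hn) (Nat.gcd_dvd_left (fibAlpha n) k)
  rw [← le_antisymm hle hmin]
  exact Nat.gcd_dvd_right _ _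

/-- Since `m ∣ F_{α(m)}`, the bound `m ≤ F_d` in `alphaCon` is automatic. -/
lemma mem_filter_fibAlpha_eq {m d : ℕ} :
    m ∈ (Icc 1 (Nat.fib d)).filter (fun m => fibAlpha m = d) ↔ 0 < m ∧ fibAlpha m = d := by
  simp only [mem_filter, mem_Icc]
  refine ⟨fun ⟨⟨hm, _⟩, h⟩ => ⟨hm, h⟩, fun ⟨hm, h⟩ => ⟨⟨hm, ?_⟩, h⟩⟩
  subst h
  exact Nat.le_of_dvd (Nat.fib_pos.mpr (fibAlpha_pos hm)) (dvd_fib_fibAlpha hm)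

lemma sum_divisors_alphaCon (f : ℕ → ℤ) {n : ℕ} (hn : 0 < n) :
    ∑ d ∈ n.divisors, alphaCon f d = ∑ m ∈ (Nat.fib n).divisors, f m := by
  have hfib : Nat.fib n ≠ 0 := (Nat.fib_pos.mpr hn).ne'
  have hdvd : ∀ m, 0 < m → (m ∣ Nat.fib n ↔ fibAlpha m ∣ n) := fun m hm =>
    (fibAlpha_dvd_iff hm n).symm
  rw [← sum_fiberwise_of_maps_to (g := fibAlpha) (t := n.divisors) ?maps f]
  case maps =>
    intro m hm
    rw [Nat.mem_divisors] at hm ⊢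
    exact ⟨(hdvd m (Nat.pos_of_dvd_of_pos hm.1 (Nat.pos_of_ne_zero hfib))).mp hm.1, hn.ne'⟩
  refine sum_congr rfl fun d hd => sum_congr (ext fun m => ?_) fun _ _ => rfl
  rw [mem_filter_fibAlpha_eq, mem_filter, Nat.mem_divisors]
  refine ⟨fun ⟨hm, h⟩ => ⟨⟨(hdvd m hm).mpr (h ▸ Nat.dvd_of_mem_divisors hd), hfib⟩, h⟩,
    fun ⟨⟨hm, _⟩, h⟩ => ⟨Nat.pos_of_dvd_of_pos hm (Nat.pos_of_ne_zero hfib), h⟩⟩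

lemma sum_divisors_moebius {N : ℕ} (hN : 0 < N) :
    ∑ d ∈ N.divisors, (ArithmeticFunction.moebius d : ℤ) = if N ≤ 1 then 1 else 0 := by
  have := congrArg (· N) ArithmeticFunction.moebius_mul_coe_zeta
  simp only [ArithmeticFunction.coe_mul_zeta_apply, ArithmeticFunction.one_apply] at this
  rw [this]
  exact if_congr (by omega) rfl rfl

lemma sum_divisors_alphaCon_of_indicator {f : ℕ → ℤ} {b c : ℕ}
    (hf : ∀ N, 0 < N → ∑ d ∈ N.divisors, f d = if N ≤ c then 1 else 0)
    (hb : Nat.fib b ≤ c) (hc : c < Nat.fib (b + 1)) (N : ℕ) (hN : 0 < N) :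
    ∑ d ∈ N.divisors, alphaCon f d = if N ≤ b then 1 else 0 := by
  rw [sum_divisors_alphaCon f hN, hf _ (Nat.fib_pos.mpr hN)]
  have : Nat.fib N ≤ c ↔ N ≤ b :=
    ⟨fun h => by_contra fun hlt =>
      (Nat.fib_mono (Nat.succ_le_of_lt (not_le.mp hlt))).not_gt (lt_of_le_of_lt h hc),
     fun h => (Nat.fib_mono h).trans hb⟩
  exact if_congr this rfl rfl

lemma eq_of_sum_divisors_eq {f g : ℕ → ℤ}
    (h : ∀ N, 0 < N → ∑ d ∈ N.divisors, f d = ∑ d ∈ N.divisors, g d) {n : ℕ} (hn : 0 < n) :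
    f n = g n :=
  (ArithmeticFunction.sum_eq_iff_sum_smul_moebius_eq.mp h n hn).symm.trans
    (ArithmeticFunction.sum_eq_iff_sum_smul_moebius_eq.mp (fun _ _ => rfl) n hn)

/-- `μ_{α³}` is a fixed point of α-contraction. -/
theorem moebius_alphaCon_cubed_fixed (n : ℕ) (hn : 0 < n) :
    alphaCon (alphaCon (alphaCon (alphaCon (fun m => ArithmeticFunction.moebius m)))) n
      = alphaCon (alphaCon (alphaCon (fun m => ArithmeticFunction.moebius m))) n := by
  have s1 := sum_divisors_alphaCon_of_indicator (fun _ => sum_divisors_moebius)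
    (b := 2) (by decide) (by decide)
  have s2 := sum_divisors_alphaCon_of_indicator s1 (b := 3) (by decide) (by decide)
  have s3 := sum_divisors_alphaCon_of_indicator s2 (b := 4) (by decide) (by decide)
  have s4 := sum_divisors_alphaCon_of_indicator s3 (b := 4) (by decide) (by decide)
  exact eq_of_sum_divisors_eq (fun N hN => (s4 N hN).trans (s3 N hN).symm) hn
end
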